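/- arXiv:2209.15273 — 2 statements merged into one kernel-verified Lean document; each statement's English description precedes it below -/
import Mathlib

section
/- Let y ∈ ℂ^M, A ∈ ℂ^{M×N}, λ > 0, and let x̂ be a global minimizer of the complex LASSO objective x ↦ (1/2)‖y − Ax‖₂² + λ‖x‖₁. Then for every i ∈ {1, …, N}, |a_i^H (y − A x̂)| ≤ λ, where a_i is the i-th column of A. -/
/-!
Write `g = aᵢᴴ (y − A x̂)` and move `x̂` along the `i`-th coordinate by `t · e^{i arg g}` with
`t > 0`. The data term changes by `−t‖g‖ + (t²/2)‖aᵢ‖²` and the `ℓ¹` term grows by at most `λ t`,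
so minimality gives `‖g‖ ≤ λ + (t/2)‖aᵢ‖²` for every `t > 0`; let `t → 0`.
-/

open Matrix Finset

/-- The complex LASSO objective `x ↦ (1/2)‖y − Ax‖₂² + λ·∑ᵢ |xᵢ|`. -/
noncomputable def lassoObj {M N : ℕ} (y : Fin M → ℂ) (A : Matrix (Fin M) (Fin N) ℂ)
    (lam : ℝ) (x : Fin N → ℂ) : ℝ :=
  (1 / 2) * ∑ j, ‖y j - A.mulVec x j‖ ^ 2 + lam * ∑ i, ‖x i‖

open ComplexConjugate

open Filter Topology in
lemma le_of_forall_pos_le_add_mul {a b c : ℝ} (h : ∀ t > 0, a ≤ b + t * c) : a ≤ b := by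
  have hlim : Tendsto (fun t : ℝ => b + t * c) (𝓝[>] 0) (𝓝 b) := by
    have hcont : Continuous fun t : ℝ => b + t * c := by fun_prop
    simpa using (hcont.tendsto 0).mono_left nhdsWithin_le_nhds
  exact ge_of_tendsto hlim (eventually_nhdsWithin_of_forall h)

lemma Complex.conj_exp_arg_mul_I_mul_self (z : ℂ) : conj (exp (z.arg * I)) * z = ‖z‖ := by
  nth_rw 2 [← z.norm_mul_exp_arg_mul_I]
  rw [mul_left_comm, ← Complex.normSq_eq_conj_mul_self, Complex.normSq_eq_norm_sq,
    Complex.norm_exp_ofReal_mul_I]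
  simp

lemma Complex.norm_sub_mul_sq (r a w : ℂ) :
    ‖r - a * w‖ ^ 2 = ‖r‖ ^ 2 - 2 * (star w * (star a * r)).re + ‖w‖ ^ 2 * ‖a‖ ^ 2 := by
  simp only [Complex.star_def, ← Complex.normSq_eq_norm_sq, Complex.normSq_sub, map_mul]
  rw [mul_comm r, mul_assoc, mul_left_comm (conj a)]
  ring

section

variable {m n : Type*}

lemma sum_norm_sub_mul_sq [Fintype m] (r a : m → ℂ) (w : ℂ) :
    ∑ j, ‖r j - a j * w‖ ^ 2
      = ∑ j, ‖r j‖ ^ 2 - 2 * (star w * (star a ⬝ᵥ r)).re + ‖w‖ ^ 2 * ∑ j, ‖a j‖ ^ 2 := by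
  rw [dotProduct, mul_sum, Complex.re_sum, mul_sum, mul_sum]
  simp only [Complex.norm_sub_mul_sq, sum_add_distrib, sum_sub_distrib, Pi.star_apply]

variable [Fintype n] [DecidableEq n]

lemma sum_norm_sub_mulVec_add_single_sq [Fintype m] (y : m → ℂ) (A : Matrix m n ℂ) (x : n → ℂ)
    (i : n) (w : ℂ) :
    ∑ j, ‖y j - (A *ᵥ (x + Pi.single i w)) j‖ ^ 2
      = ∑ j, ‖y j - (A *ᵥ x) j‖ ^ 2 - 2 * (star w * (Aᴴ *ᵥ (y - A *ᵥ x)) i).re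
        + ‖w‖ ^ 2 * ∑ j, ‖A j i‖ ^ 2 := by
  have hres (j : m) : y j - (A *ᵥ (x + Pi.single i w)) j = (y - A *ᵥ x) j - A j i * w := by
    simp [mulVec_add, mulVec_single, sub_sub, mul_comm w]
  simp only [hres]
  exact sum_norm_sub_mul_sq _ _ _

lemma sum_norm_add_single_le (x : n → ℂ) (i : n) (w : ℂ) :
    ∑ k, ‖(x + Pi.single i w : n → ℂ) k‖ ≤ ∑ k, ‖x k‖ + ‖w‖ := by
  calc ∑ k, ‖(x + Pi.single i w : n → ℂ) k‖ ≤ ∑ k, (‖x k‖ + ‖(Pi.single i w : n → ℂ) k‖) :=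
        sum_le_sum fun k _ => norm_add_le _ _
    _ = ∑ k, ‖x k‖ + ‖w‖ := by
        rw [sum_add_distrib, Fintype.sum_eq_single (f := fun k => ‖(Pi.single i w : n → ℂ) k‖) i
          fun k hk => by simp [hk]]
        simp

end

lemma lassoObj_add_single_le {M N : ℕ} (y : Fin M → ℂ) (A : Matrix (Fin M) (Fin N) ℂ)
    {lam : ℝ} (hlam : 0 ≤ lam) (x : Fin N → ℂ) (i : Fin N) (w : ℂ) :
    lassoObj y A lam (x + Pi.single i w)
      ≤ lassoObj y A lam x - (star w * (Aᴴ *ᵥ (y - A *ᵥ x)) i).re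
        + ‖w‖ ^ 2 / 2 * ∑ j, ‖A j i‖ ^ 2 + lam * ‖w‖ := by
  have hpenalty := mul_le_mul_of_nonneg_left (sum_norm_add_single_le x i w) hlam
  rw [lassoObj, lassoObj, sum_norm_sub_mulVec_add_single_sq]
  linarith

/-- if `x̂` is a global minimizer of the complex LASSO objective, then for every
`i`, `|aᵢᴴ(y − Ax̂)| ≤ λ` where `aᵢ` is the `i`-th column of `A`. -/
theorem lasso_residual_correlation_le {M N : ℕ} (y : Fin M → ℂ)
    (A : Matrix (Fin M) (Fin N) ℂ) (lam : ℝ) (hlam : 0 < lam) (xh : Fin N → ℂ)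
    (hmin : ∀ x : Fin N → ℂ, lassoObj y A lam xh ≤ lassoObj y A lam x) :
    ∀ i : Fin N, ‖Aᴴ.mulVec (y - A.mulVec xh) i‖ ≤ lam := by
  intro i
  set g := (Aᴴ *ᵥ (y - A *ᵥ xh)) i
  set u := Complex.exp (g.arg * Complex.I)
  refine le_of_forall_pos_le_add_mul (c := (∑ j, ‖A j i‖ ^ 2) / 2) fun t ht => ?_
  have hre : (star (t * u) * g).re = t * ‖g‖ := by
    rw [star_mul', mul_assoc, Complex.star_def, Complex.conj_ofReal,
      Complex.conj_exp_arg_mul_I_mul_self, ← Complex.ofReal_mul, Complex.ofReal_re]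
  have hnorm : ‖(t : ℂ) * u‖ = t := by
    rw [norm_mul, Complex.norm_exp_ofReal_mul_I, Complex.norm_real, Real.norm_of_nonneg ht.le,
      mul_one]
  have hmove := lassoObj_add_single_le y A hlam.le xh i (t * u)
  rw [hre, hnorm] at hmove
  have hscaled : t * ‖g‖ ≤ t * (lam + t * ((∑ j, ‖A j i‖ ^ 2) / 2)) := by
    linarith [hmin (xh + Pi.single i (t * u))]
  exact le_of_mul_le_mul_left hscaled ht
end

section
/- Let y ∈ ℂ^M, A ∈ ℂ^{M×N}, λ > 0, Λ > 0 and κ ≥ 0. Let x̂ be a global minimizer of the complex LASSO objective and x̂^d = x̂ + (1/Λ) A^H (y − A x̂). Let S ⊆ {1, …, N} be any index set and S^c its complement. Then #{i ∈ S : |x̂^d_i| > κ + λ/Λ} ≥ #{i ∈ S : |x̂_i| > κ} and #{i ∈ S^c : |x̂^d_i| > κ + λ/Λ} ≤ #{i ∈ S^c : |x̂_i| > κ}. Consequently, at matched false alarm levels the debiased LASSO detector's detection probability is at least that of the LASSO detector. -/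
/-! Perturbing a LASSO minimizer in a single coordinate shows that the residual correlation
`gᵢ = (Aᴴ(y − Ax̂))ᵢ` is a subgradient of `λ|·|` at `x̂ᵢ` up to a quadratic error, hence
`|gᵢ| ≤ λ`, and `gᵢ = λ x̂ᵢ / |x̂ᵢ|` when `x̂ᵢ ≠ 0`. So debiasing pushes every nonzero coordinate
radially outwards by exactly `λ/Λ` and moves a zero coordinate by at most `λ/Λ`: for `κ ≥ 0` the
two detectors declare exactly the same indices active. -/

open Matrix Finset

/-- The debiased LASSO estimator `x̂ᵈ = x̂ + (1/Λ) Aᴴ(y − Ax̂)`. -/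
noncomputable def debiasedLasso {M N : ℕ} (y : Fin M → ℂ) (A : Matrix (Fin M) (Fin N) ℂ)
    (Lam : ℝ) (xh : Fin N → ℂ) : Fin N → ℂ :=
  xh + (1 / Lam : ℝ) • Aᴴ.mulVec (y - A.mulVec xh)

open Filter Topology RealInnerProductSpace

lemma nonpos_of_forall_mul_le_sq_mul {X K : ℝ}
    (h : ∀ t : ℝ, 0 < t → t ≤ 1 → t * X ≤ t ^ 2 * K) : X ≤ 0 := by
  have hlim : Tendsto (fun t : ℝ => t * K) (𝓝[>] 0) (𝓝 0) := by
    have h0 : Tendsto (fun t : ℝ => t * K) (𝓝 0) (𝓝 (0 * K)) := tendsto_id.mul_const K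
    rw [zero_mul] at h0
    exact tendsto_nhdsWithin_of_tendsto_nhds h0
  refine ge_of_tendsto hlim ?_
  filter_upwards [Ioo_mem_nhdsGT one_pos] with t ⟨ht0, ht1⟩
  exact le_of_mul_le_mul_left (by linarith [h t ht0 ht1.le]) ht0

section ApproxSubgradient

variable {E : Type*} [NormedAddCommGroup E] [InnerProductSpace ℝ E] {a g : E} {lam C : ℝ}

lemma norm_le_of_approx_subgradient (hlam : 0 ≤ lam)
    (h : ∀ c, lam * ‖a‖ + ⟪g, c⟫ ≤ lam * ‖a + c‖ + C / 2 * ‖c‖ ^ 2) : ‖g‖ ≤ lam := by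
  have hsq : ‖g‖ ^ 2 - lam * ‖g‖ ≤ 0 := by
    refine nonpos_of_forall_mul_le_sq_mul (K := C / 2 * ‖g‖ ^ 2) fun t ht _ => ?_
    have hopt := h (t • g)
    have htri : ‖a + t • g‖ ≤ ‖a‖ + t * ‖g‖ := by
      simpa [norm_smul, abs_of_pos ht] using norm_add_le a (t • g)
    rw [real_inner_smul_right, real_inner_self_eq_norm_sq, norm_smul, Real.norm_of_nonneg ht.le]
      at hopt
    nlinarith [mul_le_mul_of_nonneg_left htri hlam]
  nlinarith [norm_nonneg g]

lemma eq_smul_of_approx_subgradient (hlam : 0 ≤ lam) (ha : a ≠ 0)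
    (h : ∀ c, lam * ‖a‖ + ⟪g, c⟫ ≤ lam * ‖a + c‖ + C / 2 * ‖c‖ ^ 2) :
    g = (lam / ‖a‖) • a := by
  have hna : 0 < ‖a‖ := norm_pos_iff.mpr ha
  have hg : ‖g‖ ≤ lam := norm_le_of_approx_subgradient hlam h
  -- shrinking `a` towards `0` shows `lam * ‖a‖ ≤ ⟪g, a⟫`, forcing equality in Cauchy–Schwarz
  have hlow : lam * ‖a‖ - ⟪g, a⟫ ≤ 0 := by
    refine nonpos_of_forall_mul_le_sq_mul (K := C / 2 * ‖a‖ ^ 2) fun t ht ht1 => ?_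
    have hopt := h (-(t • a))
    rw [← sub_eq_add_neg, show a - t • a = (1 - t) • a by rw [sub_smul, one_smul], inner_neg_right, real_inner_smul_right, norm_neg,
      norm_smul, norm_smul, Real.norm_of_nonneg (sub_nonneg.mpr ht1),
      Real.norm_of_nonneg ht.le] at hopt
    nlinarith
  have hcs : ⟪g, a⟫ ≤ ‖g‖ * ‖a‖ := real_inner_le_norm g a
  have hnorm : ‖g‖ = lam := by nlinarith
  have hinner : ⟪a, g⟫ = ‖a‖ * ‖g‖ := by rw [real_inner_comm]; nlinarith
  rw [inner_eq_norm_mul_iff_real, hnorm] at hinner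
  rw [div_eq_inv_mul, mul_smul, hinner, smul_smul, inv_mul_cancel₀ hna.ne', one_smul]

end ApproxSubgradient

section Lasso

variable {M N : ℕ} {y : Fin M → ℂ} {A : Matrix (Fin M) (Fin N) ℂ} {lam Lam : ℝ} {xh : Fin N → ℂ}

lemma lassoObj_add_single (y : Fin M → ℂ) (A : Matrix (Fin M) (Fin N) ℂ) (lam : ℝ)
    (x : Fin N → ℂ) (i : Fin N) (c : ℂ) :
    lassoObj y A lam (x + Pi.single i c) =
      lassoObj y A lam x - ⟪(Aᴴ *ᵥ (y - A *ᵥ x)) i, c⟫ + (∑ j, ‖A j i‖ ^ 2) / 2 * ‖c‖ ^ 2 +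
        lam * (‖x i + c‖ - ‖x i‖) := by
  set r := y - A *ᵥ x
  have hres : ∀ j, y j - (A *ᵥ (x + Pi.single i c)) j = r j - A j i * c := by
    intro j
    simp [r, mulVec_add, mulVec_single]
    ring
  have hquad : ∀ j, ‖r j - A j i * c‖ ^ 2 =
      ‖r j‖ ^ 2 - 2 * ⟪star (A j i) * r j, c⟫ + ‖A j i‖ ^ 2 * ‖c‖ ^ 2 := by
    intro j
    rw [norm_sub_sq_real, norm_mul, mul_pow, Complex.inner, Complex.inner]
    simp only [Complex.star_def, map_mul, Complex.mul_re, Complex.mul_im, Complex.conj_re,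
      Complex.conj_im]
    ring
  have hcorr : (Aᴴ *ᵥ r) i = ∑ j, star (A j i) * r j := by
    simp [mulVec, dotProduct, conjTranspose_apply]
  have hl1 : ∑ k, ‖(x + Pi.single i c : Fin N → ℂ) k‖ = ∑ k, ‖x k‖ + (‖x i + c‖ - ‖x i‖) := by
    rw [← sub_eq_iff_eq_add', ← sum_sub_distrib, Fintype.sum_eq_single i]
    · simp
    · intro k hk
      simp [Pi.single_eq_of_ne hk]
  have hr : ∀ j, y j - (A *ᵥ x) j = r j := fun _ => rfl
  simp only [lassoObj, hres, hr, hquad, hl1, hcorr, sum_inner, sum_add_distrib, sum_sub_distrib,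
    ← mul_sum, ← sum_mul]
  ring

lemma lasso_approx_subgradient (hmin : ∀ x, lassoObj y A lam xh ≤ lassoObj y A lam x)
    (i : Fin N) (c : ℂ) :
    lam * ‖xh i‖ + ⟪(Aᴴ *ᵥ (y - A *ᵥ xh)) i, c⟫ ≤
      lam * ‖xh i + c‖ + (∑ j, ‖A j i‖ ^ 2) / 2 * ‖c‖ ^ 2 := by
  have h := hmin (xh + Pi.single i c)
  rw [lassoObj_add_single] at h
  linarith

lemma norm_debiasedLasso_le (hlam : 0 ≤ lam) (hLam : 0 < Lam)
    (hmin : ∀ x, lassoObj y A lam xh ≤ lassoObj y A lam x) (i : Fin N) :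
    ‖debiasedLasso y A Lam xh i‖ ≤ ‖xh i‖ + lam / Lam := by
  have hcorr := norm_le_of_approx_subgradient hlam (lasso_approx_subgradient hmin i)
  calc ‖debiasedLasso y A Lam xh i‖
      ≤ ‖xh i‖ + ‖(1 / Lam) • (Aᴴ *ᵥ (y - A *ᵥ xh)) i‖ := norm_add_le _ _
    _ = ‖xh i‖ + ‖(Aᴴ *ᵥ (y - A *ᵥ xh)) i‖ / Lam := by
      rw [norm_smul, Real.norm_of_nonneg (by positivity), one_div_mul_eq_div]
    _ ≤ ‖xh i‖ + lam / Lam := by gcongr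

lemma norm_debiasedLasso_of_ne_zero (hlam : 0 ≤ lam) (hLam : 0 < Lam)
    (hmin : ∀ x, lassoObj y A lam xh ≤ lassoObj y A lam x) {i : Fin N} (hx : xh i ≠ 0) :
    ‖debiasedLasso y A Lam xh i‖ = ‖xh i‖ + lam / Lam := by
  have hna : 0 < ‖xh i‖ := norm_pos_iff.mpr hx
  have hcorr := eq_smul_of_approx_subgradient hlam hx (lasso_approx_subgradient hmin i)
  have hradial : debiasedLasso y A Lam xh i = (1 + lam / ‖xh i‖ / Lam) • xh i := by
    change xh i + (1 / Lam) • (Aᴴ *ᵥ (y - A *ᵥ xh)) i = _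
    rw [hcorr, smul_smul, add_smul, one_smul, one_div_mul_eq_div]
  rw [hradial, norm_smul, Real.norm_of_nonneg (by positivity)]
  field_simp

lemma lt_norm_debiasedLasso_iff (hlam : 0 ≤ lam) (hLam : 0 < Lam) {κ : ℝ} (hκ : 0 ≤ κ)
    (hmin : ∀ x, lassoObj y A lam xh ≤ lassoObj y A lam x) (i : Fin N) :
    κ + lam / Lam < ‖debiasedLasso y A Lam xh i‖ ↔ κ < ‖xh i‖ := by
  constructor
  · intro h
    linarith [norm_debiasedLasso_le hlam hLam hmin i]
  · intro h
    rw [norm_debiasedLasso_of_ne_zero hlam hLam hmin (norm_pos_iff.mp (hκ.trans_lt h))]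
    linarith

end Lasso

/-- on any index set `S`, the debiased LASSO detector at threshold `κ + λ/Λ`
declares at least as many indices active as the LASSO detector at threshold `κ`, and on the
complement `Sᶜ` it declares at most as many.  Hence at matched false alarm levels the debiased
LASSO detector's detection probability is at least that of the LASSO detector. -/
theorem debiasedLasso_detector_dominates {M N : ℕ} (y : Fin M → ℂ)
    (A : Matrix (Fin M) (Fin N) ℂ) (lam : ℝ) (hlam : 0 < lam)
    (Lam : ℝ) (hLam : 0 < Lam) (κ : ℝ) (hκ : 0 ≤ κ) (xh : Fin N → ℂ)
    (hmin : ∀ x : Fin N → ℂ, lassoObj y A lam xh ≤ lassoObj y A lam x)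
    (S : Finset (Fin N)) :
    (S.filter fun i => κ < ‖xh i‖).card ≤
        (S.filter fun i => κ + lam / Lam < ‖debiasedLasso y A Lam xh i‖).card ∧
      (Sᶜ.filter fun i => κ + lam / Lam < ‖debiasedLasso y A Lam xh i‖).card ≤
        (Sᶜ.filter fun i => κ < ‖xh i‖).card := by
  simp only [lt_norm_debiasedLasso_iff hlam.le hLam hκ hmin]
  exact ⟨le_rfl, le_rfl⟩
end
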